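/- Let p_i ∈ P(n, n) be projective partitions, r ∈ P(n, m) a partition, N ≥ 1, and λ_i scalars. If Σ_i λ_i η_{p_i} = 0 in (ℂ^N)^{⊗n}, then Σ_i λ_i N^{rl(r, p_i)} η_{r p_i r*} = 0 in (ℂ^N)^{⊗m}, where η_p = T_p(e_1^{⊗k}) for a projective partition p ∈ P(k,k). -/

import Mathlib

attribute [local instance] Classical.propDecidable

namespace Partitions

/-- A partition with upper row indexed by `α` and lower row indexed by `β`,
modeled as an equivalence relation (set partition) on the disjoint union. -/
abbrev Partn (α β : Type) := Setoid (α ⊕ β)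

variable {α β γ α' β' : Type}

/-- Reflection across the horizontal axis: swap upper and lower rows. -/
def reflP (p : Partn α β) : Partn β α := Setoid.comap Sum.swap p

/-- Inclusion of the two-row diagram of the top partition into the three-row diagram. -/
def iTop : α ⊕ β → α ⊕ β ⊕ γ := Sum.map id Sum.inl

/-- Inclusion of the two-row diagram of the bottom partition into the three-row diagram. -/
def iBot (α : Type) {β γ : Type} : β ⊕ γ → α ⊕ β ⊕ γ := Sum.inr

/-- Inclusion of the outer (top and bottom) rows into the three-row diagram. -/
def iOut : α ⊕ γ → α ⊕ β ⊕ γ := Sum.map id Sum.inr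

/-- Inclusion of the middle row into the three-row diagram. -/
def iMid (α : Type) {β : Type} (γ : Type) (b : β) : α ⊕ β ⊕ γ := Sum.inr (Sum.inl b)

/-- The equivalence relation generated on the three-row diagram when stacking
`p` (with rows `α`, `β`) on top of `q` (with rows `β`, `γ`). -/
def glue (q : Partn β γ) (p : Partn α β) : Setoid (α ⊕ β ⊕ γ) :=
  Relation.EqvGen.setoid (fun x y =>
    (∃ u v, p.r u v ∧ x = iTop u ∧ y = iTop v) ∨
    (∃ u v, q.r u v ∧ x = iBot α u ∧ y = iBot α v))

/-- Vertical concatenation: `p` on top, `q` below; restrict the glued relation to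
the outer rows. -/
def vcomp (q : Partn β γ) (p : Partn α β) : Partn α γ :=
  Setoid.comap iOut (glue q p)

/-- A projective partition: `p² = p = p*`. -/
def Projective (p : Partn α α) : Prop := vcomp p p = p ∧ reflP p = p

/-- A middle point lying on a removed loop: it is connected to no outer point. -/
def IsLoopPt (q : Partn β γ) (p : Partn α β) (b : β) : Prop :=
  ∀ x : α ⊕ γ, ¬ (glue q p).r (iMid α γ b) (iOut x)

/-- The number of removed loops `rl(q, p)` in the vertical concatenation. -/
noncomputable def rl (q : Partn β γ) (p : Partn α β) : ℕ :=
  Nat.card (Quotient (Setoid.comap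
    (fun b : {b : β // IsLoopPt q p b} => iMid α γ b.1) (glue q p)))

/-- The disjoint union of two set partitions. -/
def sumSetoid (p : Setoid α) (q : Setoid β) : Setoid (α ⊕ β) :=
  ⟨Sum.LiftRel p.r q.r, by
    refine ⟨?_, ?_, ?_⟩
    · rintro (a | b)
      · exact .inl (p.iseqv.refl a)
      · exact .inr (q.iseqv.refl b)
    · rintro _ _ (h | h)
      · exact .inl (p.iseqv.symm h)
      · exact .inr (q.iseqv.symm h)
    · rintro _ _ _ (h | h) h₂
      · cases h₂ with
        | inl h₂ => exact .inl (p.iseqv.trans h h₂)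
      · cases h₂ with
        | inr h₂ => exact .inr (q.iseqv.trans h h₂)⟩

/-- Horizontal concatenation `p ⊙ q` of partitions. -/
def hconcat (p : Partn α β) (q : Partn α' β') : Partn (α ⊕ α') (β ⊕ β') :=
  Setoid.comap (Equiv.sumSumSumComm α α' β β') (sumSetoid p q)

/-- Number of through-blocks `t(p)`: blocks containing both an upper and a lower point. -/
noncomputable def throughCount (p : Partn α β) : ℕ :=
  Nat.card {c : Quotient p //
    (∃ a : α, Quotient.mk p (Sum.inl a) = c) ∧ ∃ b : β, Quotient.mk p (Sum.inr b) = c}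

/-- `δ_p(i, j)`: `1` if the indices are constant on each block of `p`, `0` otherwise. -/
noncomputable def deltaP (N : ℕ) (p : Partn α β) (f : α → Fin N) (g : β → Fin N) : ℂ :=
  if ∀ x y, p.r x y → Sum.elim f g x = Sum.elim f g y then 1 else 0

/-- The matrix of the linear map `T_p : (ℂ^N)^{⊗α} → (ℂ^N)^{⊗β}` in the canonical bases. -/
noncomputable def partMatrix (N : ℕ) (p : Partn α β) :
    Matrix (β → Fin N) (α → Fin N) ℂ :=
  fun g f => deltaP N p f g

/-- The identity partition `|` in `P(1,1)` (one block joining the two points). -/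
def identP : Partn (Fin 1) (Fin 1) := ⊤

/- Viewing `T_p` as the matrix of `δ_p`, stacking gives `T_q T_p = N^{rl(q,p)} T_{qp}`:
the indices on the middle row compatible with given outer indices are determined on every block
that reaches the outer rows, and free on each of the `rl(q,p)` removed loops. Hence
`T_r η_p = N^{rl(r,p)} η_{rp}`, and the hypothesis gives `Σ λ_i N^{rl(r,p_i)} η_{r p_i} = 0`.
Finally `η_{rpr*} = η_{rp}` for projective `p`: both say that the lower indices are constant on
the blocks of `rp` and equal to the upper index on its through-blocks, because folding the upper
row of `p` onto its lower row (which `p = p² = p*` allows) maps the diagram of `rp` into that of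
`(rp)r*`. -/

open Setoid
open scoped Matrix

section Glue

variable {q : Partn β γ} {p : Partn α β}

theorem glue_iTop {u v : α ⊕ β} (h : p u v) : glue q p (iTop u) (iTop v) :=
  Relation.EqvGen.rel _ _ (Or.inl ⟨u, v, h, rfl, rfl⟩)

theorem glue_iBot {u v : β ⊕ γ} (h : q u v) : glue q p (iBot α u) (iBot α v) :=
  Relation.EqvGen.rel _ _ (Or.inr ⟨u, v, h, rfl, rfl⟩)

theorem glue_le_iff {s : Setoid (α ⊕ β ⊕ γ)} :
    glue q p ≤ s ↔ p ≤ s.comap iTop ∧ q ≤ s.comap (iBot α) := by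
  refine ⟨fun h => ⟨fun _ _ huv => h (glue_iTop huv), fun _ _ huv => h (glue_iBot huv)⟩, ?_⟩
  rintro ⟨hp, hq⟩
  refine eqvGen_le ?_
  rintro _ _ (⟨u, v, huv, rfl, rfl⟩ | ⟨u, v, huv, rfl, rfl⟩)
  exacts [hp huv, hq huv]

end Glue

section Colorings

variable {C : Type} (e : α → C) (f : β → C) (g : γ → C)

theorem comap_ker {X Y : Type} (i : X → Y) (χ : Y → C) : (ker χ).comap i = ker (χ ∘ i) :=
  rfl

theorem le_ker_iff_comap_le_ker {X Y : Type} {s : Setoid Y} {E : X → Y}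
    (hE : Function.Surjective E) (χ : Y → C) : s ≤ ker χ ↔ s.comap E ≤ ker (χ ∘ E) :=
  ⟨fun h _ _ hxy => h hxy, fun h => hE.forall₂.2 fun _ _ hxy => h hxy⟩

theorem elim_elim_comp_iTop : Sum.elim e (Sum.elim f g) ∘ iTop = Sum.elim e f := by
  funext x; cases x <;> rfl

theorem elim_elim_comp_iBot : Sum.elim e (Sum.elim f g) ∘ iBot α = Sum.elim f g :=
  rfl

theorem elim_elim_comp_iOut : Sum.elim e (Sum.elim f g) ∘ iOut = Sum.elim e g := by
  funext x; cases x <;> rfl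

variable {e f g} {q : Partn β γ} {p : Partn α β}

theorem glue_le_ker_iff :
    glue q p ≤ ker (Sum.elim e (Sum.elim f g)) ↔
      p ≤ ker (Sum.elim e f) ∧ q ≤ ker (Sum.elim f g) := by
  rw [glue_le_iff, comap_ker, comap_ker, elim_elim_comp_iTop, elim_elim_comp_iBot]

theorem vcomp_le_ker (h : glue q p ≤ ker (Sum.elim e (Sum.elim f g))) :
    vcomp q p ≤ ker (Sum.elim e g) := by
  rw [← elim_elim_comp_iOut e f g, ← comap_ker]
  exact fun _ _ hxy => h hxy

theorem deltaP_eq_ite (N : ℕ) (p : Partn α β) (f : α → Fin N) (g : β → Fin N) :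
    deltaP N p f g = if p ≤ ker (Sum.elim f g) then 1 else 0 :=
  rfl

theorem deltaP_mul_deltaP (N : ℕ) (q : Partn β γ) (p : Partn α β) (e : α → Fin N)
    (f : β → Fin N) (g : γ → Fin N) :
    deltaP N q f g * deltaP N p e f =
      if glue q p ≤ ker (Sum.elim e (Sum.elim f g)) then 1 else 0 := by
  simp only [deltaP_eq_ite, ite_zero_mul_ite_zero, mul_one, glue_le_ker_iff, and_comm]

end Colorings

section Extension

variable {O M C : Type} {s : Setoid (O ⊕ M)} {φ : O → C}

def IsIsolated (s : Setoid (O ⊕ M)) (b : M) : Prop := ∀ x, ¬ s (Sum.inr b) (Sum.inl x)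

abbrev IsolatedBlocks (s : Setoid (O ⊕ M)) : Type :=
  Quotient (s.comap fun b : {b // IsIsolated s b} => (Sum.inr b.1 : O ⊕ M))

noncomputable def extendColoring (φ : O → C) (h : IsolatedBlocks s → C) (b : M) : C :=
  if hb : IsIsolated s b then h ⟦⟨b, hb⟩⟧ else φ (not_forall_not.mp hb).choose

theorem extendColoring_cases (h : IsolatedBlocks s → C) (z : O ⊕ M) :
    (∃ x, s z (Sum.inl x) ∧ Sum.elim φ (extendColoring φ h) z = φ x) ∨
      ∃ b : {b // IsIsolated s b}, z = Sum.inr b.1 ∧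
        Sum.elim φ (extendColoring φ h) z = h ⟦b⟧ := by
  rcases z with x | b
  · exact .inl ⟨x, s.refl' _, rfl⟩
  · by_cases hb : IsIsolated s b
    · exact .inr ⟨⟨b, hb⟩, rfl, dif_pos hb⟩
    · exact .inl ⟨_, (not_forall_not.mp hb).choose_spec, dif_neg hb⟩

theorem le_ker_extendColoring (hφ : s.comap Sum.inl ≤ ker φ) (h : IsolatedBlocks s → C) :
    s ≤ ker (Sum.elim φ (extendColoring φ h)) := by
  intro z w hzw
  rcases extendColoring_cases h z with ⟨x, hzx, hz⟩ | ⟨b, rfl, hz⟩ <;>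
    rcases extendColoring_cases h w with ⟨y, hwy, hw⟩ | ⟨b', rfl, hw⟩
  · rw [ker_def, hz, hw]
    exact hφ (s.trans' (s.symm' hzx) (s.trans' hzw hwy))
  · exact absurd (s.trans' (s.symm' hzw) hzx) (b'.2 x)
  · exact absurd (s.trans' hzw hwy) (b.2 y)
  · rw [ker_def, hz, hw]
    exact congrArg h (Quotient.sound hzw)

theorem card_extensions [Finite M] (hφ : s.comap Sum.inl ≤ ker φ) :
    Nat.card {f : M → C // s ≤ ker (Sum.elim φ f)} =
      Nat.card C ^ Nat.card (IsolatedBlocks s) := by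
  rw [← Nat.card_fun]
  refine Nat.card_congr
    { toFun := fun f => Quotient.lift (fun b => f.1 b.1) fun _ _ hbb => f.2 hbb
      invFun := fun h => ⟨extendColoring φ h, le_ker_extendColoring hφ h⟩
      left_inv := fun f => Subtype.ext (funext fun b => ?_)
      right_inv := fun h => funext fun c => ?_ }
  · by_cases hb : IsIsolated s b
    · exact dif_pos hb
    · exact (dif_neg hb).trans (f.2 (not_forall_not.mp hb).choose_spec).symm
  · induction c using Quotient.ind
    exact dif_pos _

end Extension

section Composition

variable {q : Partn β γ} {p : Partn α β}

/-- Reindexes the three-row diagram as outer rows ⊕ middle row, which turns `IsIsolated` into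
`IsLoopPt`. -/
def outerMid : (α ⊕ γ) ⊕ β → α ⊕ β ⊕ γ := Sum.elim iOut (iMid α γ)

theorem rl_eq_card_isolatedBlocks :
    rl q p = Nat.card (IsolatedBlocks ((glue q p).comap outerMid)) :=
  rfl

theorem card_compatible_colorings {N : ℕ} [Finite β] {e : α → Fin N} {g : γ → Fin N}
    (h : vcomp q p ≤ ker (Sum.elim e g)) :
    Nat.card {f : β → Fin N // glue q p ≤ ker (Sum.elim e (Sum.elim f g))} = N ^ rl q p := by
  have hE : Function.Surjective (outerMid (α := α) (β := β) (γ := γ)) := by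
    rintro (a | b | c)
    exacts [⟨.inl (.inl a), rfl⟩, ⟨.inr b, rfl⟩, ⟨.inl (.inr c), rfl⟩]
  have hχ : ∀ f : β → Fin N,
      Sum.elim e (Sum.elim f g) ∘ outerMid = Sum.elim (Sum.elim e g) f := by
    intro f; funext z; rcases z with (a | c) | b <;> rfl
  simp_rw [le_ker_iff_comap_le_ker hE, hχ]
  rw [card_extensions h, Nat.card_fin, rl_eq_card_isolatedBlocks]

theorem partMatrix_mul_partMatrix (N : ℕ) [Fintype β] [DecidableEq β] (q : Partn β γ)
    (p : Partn α β) :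
    partMatrix N q * partMatrix N p = ((N : ℂ) ^ rl q p) • partMatrix N (vcomp q p) := by
  ext g e
  simp only [Matrix.mul_apply, Matrix.smul_apply, smul_eq_mul, partMatrix, deltaP_mul_deltaP,
    Finset.sum_boole]
  rw [deltaP_eq_ite]
  split_ifs with h
  · rw [← Fintype.card_subtype, ← Nat.card_eq_fintype_card, card_compatible_colorings h]
    push_cast
    ring
  · rw [mul_zero, Nat.cast_eq_zero, Finset.card_eq_zero, Finset.filter_eq_empty_iff]
    exact fun f _ hf => h (vcomp_le_ker hf)

end Composition

namespace Projective

variable {p : Partn α α}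

theorem rel_swap (hp : Projective p) {x y : α ⊕ α} : p (Sum.swap x) (Sum.swap y) ↔ p x y :=
  Iff.of_eq (congrArg (fun s : Partn α α => s x y) hp.2)

theorem rel_inl_inr_self (hp : Projective p) {a b : α} (h : p (Sum.inl a) (Sum.inr b)) :
    p (Sum.inl b) (Sum.inr b) := by
  have hba : p (Sum.inl b) (Sum.inr a) := (hp.rel_swap).1 (p.symm' h)
  have : vcomp p p (Sum.inl b) (Sum.inr b) :=
    (glue p p).trans' (glue_iTop hba) (glue_iBot (α := α) h)
  rwa [hp.1] at this

theorem rel_inl_elim (hp : Projective p) {u v : α ⊕ α} (h : p u v) :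
    p (Sum.inl (Sum.elim id id u)) (Sum.inl (Sum.elim id id v)) := by
  have fold_right : ∀ a w, p (Sum.inl a) w → p (Sum.inl a) (Sum.inl (Sum.elim id id w)) := by
    rintro a (b | b) hw
    exacts [hw, p.trans' hw (p.symm' (hp.rel_inl_inr_self hw))]
  rcases u with a | a
  · exact fold_right a v h
  · rcases v with b | b
    · exact p.symm' (fold_right b _ (p.symm' h))
    · exact (hp.rel_swap).2 h

end Projective

section Conjugation

variable {p : Partn α α} {C : Type}

/-- Sends the top two rows of the diagram of `r p` onto the middle row of the diagram of
`(r p) r*`, and the bottom row onto its top row. -/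
def foldRows : α ⊕ α ⊕ γ → γ ⊕ α ⊕ γ :=
  Sum.elim (iMid γ γ) (Sum.elim (iMid γ γ) Sum.inl)

theorem glue_le_comap_foldRows (hp : Projective p) (r : Partn α γ) :
    glue r p ≤ (glue (vcomp r p) (reflP r)).comap foldRows := by
  refine glue_le_iff.2 ⟨fun u v huv => ?_, fun u v huv => ?_⟩
  · have hrp : vcomp r p (Sum.inl (Sum.elim id id u)) (Sum.inl (Sum.elim id id v)) :=
      glue_iTop (hp.rel_inl_elim huv)
    have := glue_iBot (p := reflP r) hrp
    cases u <;> cases v <;> exact this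
  · have hr : reflP r (Sum.swap u) (Sum.swap v) := by cases u <;> cases v <;> exact huv
    have := glue_iTop (q := vcomp r p) hr
    cases u <;> cases v <;> exact this

theorem vcomp_reflP_le_ker_iff (hp : Projective p) (r : Partn α γ) (c : C) (g : γ → C) :
    vcomp (vcomp r p) (reflP r) ≤ ker (Sum.elim (fun _ => c) g) ↔
      vcomp r p ≤ ker (Sum.elim (fun _ => c) g) := by
  constructor
  · intro ht
    have through : ∀ u x, vcomp r p (Sum.inl u) (Sum.inr x) →
        vcomp (vcomp r p) (reflP r) (Sum.inl x) (Sum.inr x) := fun u x h =>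
      (glue _ _).trans' ((glue _ _).symm' (glue_le_comap_foldRows hp r h)) (glue_iBot h)
    rintro (u | x) (v | y) h
    · rfl
    · exact ht (through u y h)
    · exact (ht (through v x ((vcomp r p).symm' h))).symm
    · have hxy : vcomp (vcomp r p) (reflP r) (Sum.inr x) (Sum.inr y) := glue_iBot h
      exact ht hxy
  · intro hs
    refine vcomp_le_ker (glue_le_ker_iff.2 ⟨?_, hs⟩)
    rintro (_ | _) (_ | _) _ <;> rfl

end Conjugation

/-- `η_p = T_p (e_c ⊗ ⋯ ⊗ e_c)`. -/
noncomputable def eta (N : ℕ) (p : Partn α β) (c : Fin N) : (β → Fin N) → ℂ :=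
  fun g => partMatrix N p g fun _ => c

theorem partMatrix_mulVec_eta (N : ℕ) [Fintype β] [DecidableEq β] (q : Partn β γ)
    (p : Partn α β) (c : Fin N) :
    partMatrix N q *ᵥ eta N p c = ((N : ℂ) ^ rl q p) • eta N (vcomp q p) c := by
  funext g
  exact congrFun (congrFun (partMatrix_mul_partMatrix N q p) g) _

theorem eta_vcomp_reflP {p : Partn α α} (hp : Projective p) (N : ℕ) (r : Partn α γ)
    (c : Fin N) : eta N (vcomp (vcomp r p) (reflP r)) c = eta N (vcomp r p) c := by
  funext g
  simp only [eta, partMatrix, deltaP_eq_ite, vcomp_reflP_le_ker_iff hp]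

/-- if `Σ λ_i η_{p_i} = 0` for projective `p_i ∈ P(n,n)`, then for any
`r ∈ P(n,m)` also `Σ λ_i N^{rl(r,p_i)} η_{r p_i r*} = 0`. -/
theorem eta_relation_conjugation (n m N : ℕ) (hN : 1 ≤ N) (ι : Type) [Fintype ι]
    (p : ι → Partn (Fin n) (Fin n)) (hp : ∀ i, Projective (p i))
    (r : Partn (Fin n) (Fin m)) (lam : ι → ℂ)
    (h : ∑ i, lam i • (fun g => partMatrix N (p i) g (fun _ => ⟨0, hN⟩))
          = (0 : (Fin n → Fin N) → ℂ)) :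
    ∑ i, (lam i * (N : ℂ) ^ rl r (p i)) •
        (fun g => partMatrix N (vcomp (vcomp r (p i)) (reflP r)) g (fun _ => ⟨0, hN⟩))
      = (0 : (Fin m → Fin N) → ℂ) := by
  change ∑ i, lam i • eta N (p i) ⟨0, hN⟩ = 0 at h
  calc ∑ i, (lam i * (N : ℂ) ^ rl r (p i)) •
        eta N (vcomp (vcomp r (p i)) (reflP r)) ⟨0, hN⟩
      = ∑ i, lam i • partMatrix N r *ᵥ eta N (p i) ⟨0, hN⟩ := by
        simp only [eta_vcomp_reflP (hp _), partMatrix_mulVec_eta, mul_smul]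
    _ = partMatrix N r *ᵥ ∑ i, lam i • eta N (p i) ⟨0, hN⟩ := by
        simp only [Matrix.mulVec_sum, Matrix.mulVec_smul]
    _ = 0 := by rw [h, Matrix.mulVec_zero]

end Partitions
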